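/- Let Ω be a finite probability space with expectation E, and for each ω ∈ Ω let σ_ω be a density matrix and Π_ω an orthogonal projection on a fixed finite-dimensional complex Hilbert space. Let P be an orthogonal projection and Q a positive semidefinite operator with Q ≤ P and QP = PQ, and set Q' := P − (P − Q)^{1/2}. Suppose 0 < η < ε/3, E[ Tr( σ_ω (P − Q') Π_ω (P − Q') ) ] ≤ 1 − ε, and E[ Tr( σ_ω P Π_ω P ) ] > 1 − η. Then E[ Tr( σ_ω Q ) ] ≥ η². -/

import Mathlib

open Matrix Filter
open scoped BigOperators ComplexOrder

noncomputable section

/-- Operators on the `n`-fold tensor power of a `d`-dimensional Hilbert space. -/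
abbrev MatPow (d n : ℕ) := Matrix (Fin n → Fin d) (Fin n → Fin d) ℂ

/-- A density matrix: positive semidefinite with unit trace. -/
def IsDensity {m : Type*} [Fintype m] (ρ : Matrix m m ℂ) : Prop :=
  ρ.PosSemidef ∧ ρ.trace = 1

/-- Loewner order `A ≤ B`. -/
def Loewner {m : Type*} [Fintype m] (A B : Matrix m m ℂ) : Prop := (B - A).PosSemidef

/-- An orthogonal projection. -/
def IsProjection {m : Type*} [Fintype m] (P : Matrix m m ℂ) : Prop :=
  P.IsHermitian ∧ P * P = P

/-- Positive semidefinite square root (zero on non-PSD input). -/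
def psqrt {m : Type*} [Fintype m] [DecidableEq m] (A : Matrix m m ℂ) : Matrix m m ℂ :=
  letI := Classical.propDecidable A.PosSemidef
  if h : A.PosSemidef then
    (h.1.eigenvectorUnitary : Matrix m m ℂ) * diagonal ((↑) ∘ (√·) ∘ h.1.eigenvalues) *
      (star h.1.eigenvectorUnitary : Matrix m m ℂ)
  else 0

/-- Fidelity `F(A,B) = Tr √(√A B √A)` of positive semidefinite operators. -/
def fidelity {m : Type*} [Fintype m] [DecidableEq m] (A B : Matrix m m ℂ) : ℝ :=
  ((psqrt (psqrt A * B * psqrt A)).trace).re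

/-- The trace norm `Tr |A| = Tr √(Aᴴ A)`. -/
def traceNorm {m : Type*} [Fintype m] [DecidableEq m] (A : Matrix m m ℂ) : ℝ :=
  ((psqrt (Aᴴ * A)).trace).re

/-- Von Neumann entropy `S(ρ) = -Tr(ρ log₂ ρ)` (via eigenvalues, base-2 logarithm). -/
def vnEntropy {m : Type*} [Fintype m] [DecidableEq m] (ρ : Matrix m m ℂ) : ℝ :=
  if h : ρ.IsHermitian then -∑ i, h.eigenvalues i * Real.logb 2 (h.eigenvalues i) else 0

/-- Linear maps from operators on an `a`-dimensional space to operators on a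
`b`-dimensional space. -/
abbrev QChannelMap (a b : ℕ) := Matrix (Fin a) (Fin a) ℂ →ₗ[ℂ] Matrix (Fin b) (Fin b) ℂ

/-- The Choi matrix of a linear map. -/
def choiMatrix {a b : ℕ} (Φ : QChannelMap a b) : Matrix (Fin a × Fin b) (Fin a × Fin b) ℂ :=
  Matrix.of fun p p' => Φ (Matrix.single p.1 p'.1 1) p.2 p'.2

/-- Completely positive (positive semidefinite Choi matrix) and trace preserving. -/
def IsCPTP {a b : ℕ} (Φ : QChannelMap a b) : Prop :=
  (choiMatrix Φ).PosSemidef ∧ ∀ ρ : Matrix (Fin a) (Fin a) ℂ, (Φ ρ).trace = ρ.trace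

/-- The `n`-fold tensor product map `Φs 0 ⊗ ⋯ ⊗ Φs (n-1)`. -/
def tensChan {a b : ℕ} (n : ℕ) (Φs : Fin n → QChannelMap a b) (ρ : MatPow a n) :
    MatPow b n :=
  Matrix.of fun y y' => ∑ x : Fin n → Fin a, ∑ x' : Fin n → Fin a,
    ρ x x' * ∏ k, Φs k (Matrix.single (x k) (x' k) 1) (y k) (y' k)

/-- The Markov weight `γ_{i₁} q_{i₁ i₂} ⋯ q_{i_{n-1} i_n}` of a trajectory. -/
def chainWt {I : Type*} (q : I → I → ℝ) (γ : I → ℝ) {n : ℕ} (i : Fin n → I) : ℝ :=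
  ∏ k : Fin n, if k.val = 0 then γ (i k)
    else q (i ⟨k.val - 1, Nat.lt_of_le_of_lt (Nat.pred_le _) k.isLt⟩) (i k)

/-- The memory channel `Φ^{(n)}` with Markovian correlated noise. -/
def memChan {I : Type*} [Fintype I] {a b : ℕ} (q : I → I → ℝ) (γ : I → ℝ)
    (Φ : I → QChannelMap a b) (n : ℕ) (ρ : MatPow a n) : MatPow b n :=
  ∑ i : Fin n → I, chainWt q γ i • tensChan n (fun k => Φ (i k)) ρ

/-- `γ_C = ∑_{i ∈ C} γ_i`. -/
def gammaC {I : Type*} [Fintype I] [DecidableEq I] (γ : I → ℝ) (C : Finset I) : ℝ :=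
  ∑ i ∈ C, γ i

/-- The channel `Φ_C^{(n)}` restricted to the class `C`. -/
def classChan {I : Type*} [Fintype I] [DecidableEq I] {a b : ℕ} (q : I → I → ℝ)
    (γ : I → ℝ) (Φ : I → QChannelMap a b) (C : Finset I) (n : ℕ) (ρ : MatPow a n) :
    MatPow b n :=
  (gammaC γ C)⁻¹ • ∑ i : Fin n → {x // x ∈ C},
    chainWt q γ (fun k => (i k : I)) • tensChan n (fun k => Φ (i k : I)) ρ

/-- The transition matrix of the Markov chain. -/
def qMatrix {I : Type*} [Fintype I] (q : I → I → ℝ) : Matrix I I ℝ := Matrix.of q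

/-- `j` is accessible from `i`. -/
def Accessible {I : Type*} [Fintype I] [DecidableEq I] (q : I → I → ℝ) (i j : I) : Prop :=
  ∃ n : ℕ, 0 < (qMatrix q ^ n) i j

/-- `i` and `j` communicate. -/
def Communicates {I : Type*} [Fintype I] [DecidableEq I] (q : I → I → ℝ) (i j : I) : Prop :=
  Accessible q i j ∧ Accessible q j i

/-- `C` is a communicating class. -/
def IsCommClass {I : Type*} [Fintype I] [DecidableEq I] (q : I → I → ℝ) (C : Finset I) :
    Prop :=
  ∃ i : I, ∀ j, j ∈ C ↔ Communicates q i j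

/-- The class `C` is aperiodic: for each of its states, the gcd of the return
times is `1`. -/
def IsAperiodicClass {I : Type*} [Fintype I] [DecidableEq I] (q : I → I → ℝ)
    (C : Finset I) : Prop :=
  ∀ i ∈ C, ∀ d : ℕ, (∀ n : ℕ, 0 < n → 0 < (qMatrix q ^ n) i i → d ∣ n) → d = 1

/-- The class `C` is a (deterministic) periodic cycle `i₀ → i₁ → ⋯ → i_{L-1} → i₀` of
period `L ≥ 2`, enumerated by the `L`-periodic function `e : ℕ → I`. -/
def IsPeriodicCycle {I : Type*} [Fintype I] [DecidableEq I] (q : I → I → ℝ)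
    (C : Finset I) (L : ℕ) (e : ℕ → I) : Prop :=
  2 ≤ L ∧ (∀ k, e (k + L) = e k) ∧ (∀ j, j ∈ C ↔ ∃ k < L, e k = j) ∧
    (∀ k k', k < L → k' < L → e k = e k' → k = k') ∧ ∀ k, q (e k) (e (k + 1)) = 1

/-- The branch channel `Φ_{C,i_k}^{(n)} = Φ_{i_k} ⊗ Φ_{i_{k+1}} ⊗ ⋯ ⊗ Φ_{i_{k+n-1}}`
of a periodic cycle enumerated by `e`, started at position `k`. -/
def cycleChan {I : Type*} {a b : ℕ} (Φ : I → QChannelMap a b) (e : ℕ → I) (k n : ℕ)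
    (ρ : MatPow a n) : MatPow b n :=
  tensChan n (fun r => Φ (e (k + r.val))) ρ

/-- A finite ensemble of density matrices. -/
def IsEnsemble {m : Type*} [Fintype m] {J : ℕ} (p : Fin J → ℝ)
    (ρ : Fin J → Matrix m m ℂ) : Prop :=
  (∀ j, 0 ≤ p j) ∧ ∑ j, p j = 1 ∧ ∀ j, IsDensity (ρ j)

/-- Mean Holevo quantity of an ensemble for an aperiodic class `C`. -/
def holevoAper {I : Type*} [Fintype I] [DecidableEq I] {a b : ℕ} (q : I → I → ℝ)
    (γ : I → ℝ) (Φ : I → QChannelMap a b) (C : Finset I) (n : ℕ) {J : ℕ}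
    (p : Fin J → ℝ) (ρ : Fin J → MatPow a n) : ℝ :=
  (1 / (n : ℝ)) * (vnEntropy (∑ j, p j • classChan q γ Φ C n (ρ j)) -
    ∑ j, p j * vnEntropy (classChan q γ Φ C n (ρ j)))

/-- Mean Holevo quantity of an ensemble for a periodic cycle of period `L`
enumerated by `e`. -/
def holevoCyc {I : Type*} {a b : ℕ} (Φ : I → QChannelMap a b) (e : ℕ → I) (L n : ℕ)
    {J : ℕ} (p : Fin J → ℝ) (ρ : Fin J → MatPow a n) : ℝ :=
  (1 / ((n : ℝ) * L)) * ∑ k : Fin L,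
    (vnEntropy (cycleChan Φ e k.val n (∑ j, p j • ρ j)) -
      ∑ j, p j * vnEntropy (cycleChan Φ e k.val n (ρ j)))

/-- The mean Holevo quantity `χ̄_C^{(n)}` of a communicating class. -/
def chibarC {I : Type*} [Fintype I] [DecidableEq I] {a b : ℕ} (q : I → I → ℝ)
    (γ : I → ℝ) (Φ : I → QChannelMap a b) (C : Finset I) (n : ℕ) {J : ℕ}
    (p : Fin J → ℝ) (ρ : Fin J → MatPow a n) : ℝ :=
  letI := Classical.propDecidable (∃ L e, IsPeriodicCycle q C L e)
  if h : ∃ L e, IsPeriodicCycle q C L e then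
    holevoCyc Φ h.choose_spec.choose h.choose n p ρ
  else holevoAper q γ Φ C n p ρ

/-- `χ̄_n`: the supremum over ensembles of the minimum over communicating classes
(of positive weight) of the mean Holevo quantities. -/
def chibar {I : Type*} [Fintype I] [DecidableEq I] {a b : ℕ} (q : I → I → ℝ)
    (γ : I → ℝ) (Φ : I → QChannelMap a b) (n : ℕ) : ℝ :=
  sSup {x : ℝ | ∃ (J : ℕ) (p : Fin J → ℝ) (ρ : Fin J → MatPow a n),
    IsEnsemble p ρ ∧
    x = sInf {y : ℝ | ∃ C : Finset I, IsCommClass q C ∧ 0 < gammaC γ C ∧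
      y = chibarC q γ Φ C n p ρ}}

/-- The `n`-use Holevo quantity of the memory channel. -/
def chiN {I : Type*} [Fintype I] {a b : ℕ} (q : I → I → ℝ) (γ : I → ℝ)
    (Φ : I → QChannelMap a b) (n : ℕ) : ℝ :=
  sSup {x : ℝ | ∃ (J : ℕ) (p : Fin J → ℝ) (ρ : Fin J → MatPow a n),
    IsEnsemble p ρ ∧
    x = (1 / (n : ℝ)) * (vnEntropy (∑ j, p j • memChan q γ Φ n (ρ j)) -
      ∑ j, p j * vnEntropy (memChan q γ Φ n (ρ j)))}

/-- A code: densities as codewords and a sub-POVM as decoder. -/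
def IsCode {a b : ℕ} (n N : ℕ) (ρ : Fin N → MatPow a n) (E : Fin N → MatPow b n) : Prop :=
  (∀ k, IsDensity (ρ k)) ∧ (∀ k, (E k).PosSemidef) ∧ Loewner (∑ k, E k) 1

/-- Average probability of error of a code for the memory channel. -/
def avgErr {I : Type*} [Fintype I] {a b : ℕ} (q : I → I → ℝ) (γ : I → ℝ)
    (Φ : I → QChannelMap a b) (n N : ℕ) (ρ : Fin N → MatPow a n)
    (E : Fin N → MatPow b n) : ℝ :=
  (1 / (N : ℝ)) * ∑ k, (1 - ((memChan q γ Φ n (ρ k) * E k).trace).re)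

/-- `R` is an achievable rate for the memory channel. -/
def AchievableRate {I : Type*} [Fintype I] {a b : ℕ} (q : I → I → ℝ) (γ : I → ℝ)
    (Φ : I → QChannelMap a b) (R : ℝ) : Prop :=
  0 ≤ R ∧ ∃ (N : ℕ → ℕ) (ρ : ∀ n, Fin (N n) → MatPow a n)
    (E : ∀ n, Fin (N n) → MatPow b n),
    (∀ n, IsCode n (N n) (ρ n) (E n)) ∧
    (∀ n : ℕ, (2 : ℝ) ^ ((n : ℝ) * R) ≤ (N n : ℝ)) ∧
    Tendsto (fun n => avgErr q γ Φ n (N n) (ρ n) (E n)) atTop (nhds 0)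

/-- The classical capacity: the supremum of achievable rates. -/
def capacity {I : Type*} [Fintype I] {a b : ℕ} (q : I → I → ℝ) (γ : I → ℝ)
    (Φ : I → QChannelMap a b) : ℝ :=
  sSup {R : ℝ | AchievableRate q γ Φ R}

/-- A stochastic matrix. -/
def IsStochastic {I : Type*} [Fintype I] (q : I → I → ℝ) : Prop :=
  (∀ i j, 0 ≤ q i j) ∧ ∀ i, ∑ j, q i j = 1

/-- An invariant probability distribution. -/
def IsInvariantDist {I : Type*} [Fintype I] (q : I → I → ℝ) (γ : I → ℝ) : Prop :=
  (∀ i, 0 ≤ γ i) ∧ ∑ i, γ i = 1 ∧ ∀ j, γ j = ∑ i, γ i * q i j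

/-- The chain is irreducible. -/
def IsIrreducibleChain {I : Type*} [Fintype I] [DecidableEq I] (q : I → I → ℝ) : Prop :=
  ∀ i j, Accessible q i j

/-- The chain is aperiodic. -/
def IsAperiodicChain {I : Type*} [Fintype I] [DecidableEq I] (q : I → I → ℝ) : Prop :=
  ∀ i : I, ∀ d : ℕ, (∀ n : ℕ, 0 < n → 0 < (qMatrix q ^ n) i i → d ∣ n) → d = 1

/-- The index of the `s`-th site of the `r`-th block. -/
def blockIdx {m l : ℕ} (r : Fin m) (s : Fin l) : Fin (m * l) :=
  ⟨r.val * l + s.val, by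
    have h1 := r.isLt
    have h2 := s.isLt
    calc r.val * l + s.val < r.val * l + l := Nat.add_lt_add_left h2 _
      _ = (r.val + 1) * l := by ring
      _ ≤ m * l := Nat.mul_le_mul_right _ h1⟩

/-- The tensor product `ρ 0 ⊗ ρ 1 ⊗ ⋯ ⊗ ρ (m-1)` of `m` states on `l` sites each. -/
def kronFam {d l : ℕ} {m : ℕ} (ρ : Fin m → MatPow d l) : MatPow d (m * l) :=
  Matrix.of fun x x' =>
    ∏ r : Fin m, ρ r (fun s => x (blockIdx r s)) (fun s => x' (blockIdx r s))

/-- The `m`-fold tensor power `ρ^{⊗ m}` of a state on `l` sites. -/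
def kronPow {d l : ℕ} (m : ℕ) (ρ : MatPow d l) : MatPow d (m * l) := kronFam fun _ => ρ

/-- The tensor product `τ 0 ⊗ ⋯ ⊗ τ (n-1)` of single-site states. -/
def kronSites {d n : ℕ} (τ : Fin n → Matrix (Fin d) (Fin d) ℂ) : MatPow d n :=
  Matrix.of fun x x' => ∏ r, τ r (x r) (x' r)

/-- The tensor product of a state on `a` sites and a state on `b` sites. -/
def kron2 {d a b : ℕ} (A : MatPow d a) (B : MatPow d b) : MatPow d (a + b) :=
  Matrix.of fun x x' =>
    A (fun s => x (Fin.castAdd b s)) (fun s => x' (Fin.castAdd b s)) *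
      B (fun t => x (Fin.natAdd a t)) (fun t => x' (Fin.natAdd a t))

/-- `A ⊗ 1 ⊗ B` on `(2m+k)·l` sites, where `A`, `B` act on the first and last `m·l`
sites respectively and the identity acts on the middle `k·l` sites. -/
def threeBlock {d : ℕ} (m k l : ℕ) (A B : MatPow d (m * l)) : MatPow d ((2 * m + k) * l) :=
  Matrix.of fun y y' =>
    A (fun s => y ⟨s.val, by
          have hs := s.isLt
          have h : m * l ≤ (2 * m + k) * l := Nat.mul_le_mul_right _ (by omega)
          omega⟩)
      (fun s => y' ⟨s.val, by
          have hs := s.isLt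
          have h : m * l ≤ (2 * m + k) * l := Nat.mul_le_mul_right _ (by omega)
          omega⟩) *
    (if (fun t : Fin (k * l) => y ⟨m * l + t.val, by
            have ht := t.isLt
            have h : (m + k) * l ≤ (2 * m + k) * l := Nat.mul_le_mul_right _ (by omega)
            have e : (m + k) * l = m * l + k * l := Nat.add_mul _ _ _
            omega⟩) =
        (fun t : Fin (k * l) => y' ⟨m * l + t.val, by
            have ht := t.isLt
            have h : (m + k) * l ≤ (2 * m + k) * l := Nat.mul_le_mul_right _ (by omega)
            have e : (m + k) * l = m * l + k * l := Nat.add_mul _ _ _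
            omega⟩)
      then (1 : ℂ) else 0) *
    B (fun s => y ⟨(m + k) * l + s.val, by
          have hs := s.isLt
          have e : (2 * m + k) * l = (m + k) * l + m * l := by
            rw [show 2 * m + k = (m + k) + m by omega, Nat.add_mul]
          omega⟩)
      (fun s => y' ⟨(m + k) * l + s.val, by
          have hs := s.isLt
          have e : (2 * m + k) * l = (m + k) * l + m * l := by
            rw [show 2 * m + k = (m + k) + m by omega, Nat.add_mul]
          omega⟩)


/-! Put `S = √(P - Q)` and `T = P - S`, so that `P = S + T`. Since `0 ≤ Q ≤ P` and `P` is a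
projection, `S ≤ √P = P`; hence `S` is absorbed by `P` and `0 ≤ S ≤ 1`, which gives
`Q - T² = 2 (S - S²) ≥ 0`. For the seminorm `‖X‖ = √Re Tr(σ Xᴴ X)`, the triangle inequality for
`Π P = Π S + Π T` and `‖Π T‖ ≤ ‖T‖` bound `√Tr(σ P Π P)` by `√Tr(σ T²) + √Tr(σ S Π S)`, and
Cauchy–Schwarz carries this bound over to the averages. So `√(1 - η) < √E Tr(σ T²) + √(1 - ε)`,
and `√E Tr(σ Q) ≥ √E Tr(σ T²) > √(1 - η) - √(1 - ε) ≥ (ε - η) / 2 > η`.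
-/

open scoped MatrixOrder

section CStarAlgebra

variable {A : Type*} [CStarAlgebra A] [PartialOrder A] [StarOrderedRing A]

lemma IsStarProjection.sqrt_eq {p : A} (hp : IsStarProjection p) : CFC.sqrt p = p :=
  (CFC.sqrt_eq_iff p p hp.nonneg hp.nonneg).2 hp.isIdempotentElem

lemma mul_self_le_self_of_nonneg_of_le_one {s : A} (hs₀ : 0 ≤ s) (hs₁ : s ≤ 1) : s * s ≤ s := by
  set r := CFC.sqrt s
  have hrr : r * r = s := CFC.sqrt_mul_sqrt_self s
  have hconj : r * (1 - s) * r = s - s * s := by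
    rw [← hrr]; noncomm_ring
  exact sub_nonneg.1 (hconj ▸ conjugate_nonneg_of_nonneg (sub_nonneg.2 hs₁) (CFC.sqrt_nonneg s))

theorem IsStarProjection.sub_sqrt_sub_mul_self_le {p q : A} (hp : IsStarProjection p)
    (hq : 0 ≤ q) (hqp : q ≤ p) :
    (p - CFC.sqrt (p - q)) * (p - CFC.sqrt (p - q)) ≤ q := by
  set s := CFC.sqrt (p - q)
  have hs₀ : 0 ≤ s := CFC.sqrt_nonneg _
  have hsp : s ≤ p := hp.sqrt_eq ▸ CFC.sqrt_le_sqrt _ _ (sub_le_self p hq)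
  have hss : s * s = p - q := CFC.sqrt_mul_sqrt_self _ (sub_nonneg.2 hqp)
  obtain ⟨hsp', hps'⟩ := hp.mul_right_and_mul_left_of_nonneg_of_le hs₀ hsp
  have hdiff : q - (p - s) * (p - s) = 2 • (s - s * s) := by
    rw [show q = p - s * s by rw [hss, sub_sub_cancel]]
    simp only [sub_mul, mul_sub, hp.isIdempotentElem.eq, hsp', hps']
    abel
  have hs₁ : s * s ≤ s := mul_self_le_self_of_nonneg_of_le_one hs₀ (hsp.trans hp.le_one)
  rw [← sub_nonneg, hdiff]
  exact nsmul_nonneg (sub_nonneg.2 hs₁) 2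

end CStarAlgebra

lemma sum_mul_le_sq_sqrt_add_sqrt {ι : Type*} (s : Finset ι) {w a b c : ι → ℝ}
    (hw : ∀ i, 0 ≤ w i) (ha : ∀ i, 0 ≤ a i) (hb : ∀ i, 0 ≤ b i)
    (hc : ∀ i, c i ≤ (√(a i) + √(b i)) ^ 2) :
    ∑ i ∈ s, w i * c i ≤ (√(∑ i ∈ s, w i * a i) + √(∑ i ∈ s, w i * b i)) ^ 2 := by
  have expand : ∀ i, w i * (√(a i) + √(b i)) ^ 2 =
      w i * a i + w i * b i + 2 * (√(w i * a i) * √(w i * b i)) := fun i => by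
    rw [Real.sqrt_mul (hw i), Real.sqrt_mul (hw i), add_sq, Real.sq_sqrt (ha i),
      Real.sq_sqrt (hb i)]
    linear_combination (-2 * √(a i) * √(b i)) * Real.mul_self_sqrt (hw i)
  have cauchy_schwarz := Real.sum_sqrt_mul_sqrt_le s (fun i => mul_nonneg (hw i) (ha i))
    (fun i => mul_nonneg (hw i) (hb i))
  calc ∑ i ∈ s, w i * c i ≤ ∑ i ∈ s, w i * (√(a i) + √(b i)) ^ 2 :=
        Finset.sum_le_sum fun i _ => mul_le_mul_of_nonneg_left (hc i) (hw i)
    _ = ∑ i ∈ s, w i * a i + ∑ i ∈ s, w i * b i +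
          2 * ∑ i ∈ s, √(w i * a i) * √(w i * b i) := by
        simp only [expand, Finset.sum_add_distrib, Finset.mul_sum]
    _ ≤ (√(∑ i ∈ s, w i * a i) + √(∑ i ∈ s, w i * b i)) ^ 2 := by
        rw [add_sq, Real.sq_sqrt (Finset.sum_nonneg fun i _ => mul_nonneg (hw i) (ha i)),
          Real.sq_sqrt (Finset.sum_nonneg fun i _ => mul_nonneg (hw i) (hb i))]
        linarith

lemma sq_le_of_one_sub_lt_sq_sqrt_add_sqrt {x y ε η : ℝ} (hx : 0 ≤ x) (hy : 0 ≤ y)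
    (hyε : y ≤ 1 - ε) (hη : 0 < η) (hηε : η < ε / 3) (h : 1 - η < (√x + √y) ^ 2) :
    η ^ 2 ≤ x := by
  have hb : √y ^ 2 ≤ 1 - ε := by rwa [Real.sq_sqrt hy]
  have hb1 : √y ≤ 1 - ε / 2 := by nlinarith [Real.sqrt_nonneg y]
  have ha : η ≤ √x := by nlinarith [Real.sqrt_nonneg x, Real.sqrt_nonneg y]
  calc η ^ 2 ≤ √x ^ 2 := pow_le_pow_left₀ hη.le ha 2
    _ = x := Real.sq_sqrt hx

namespace Matrix

variable {n : Type*} [Fintype n] [DecidableEq n]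

lemma psqrt_eq_cfcSqrt {A : Matrix n n ℂ} (hA : A.PosSemidef) : psqrt A = CFC.sqrt A := by
  rw [CFC.sqrt_eq_real_sqrt A hA.nonneg, cfcₙ_eq_cfc, hA.1.cfc_eq, psqrt, dif_pos hA]
  rfl

omit [DecidableEq n] in
lemma IsProjection.isStarProjection {P : Matrix n n ℂ} (hP : IsProjection P) :
    IsStarProjection P :=
  ⟨hP.2, hP.1⟩

lemma re_trace_mul_nonneg {σ X : Matrix n n ℂ} (hσ : 0 ≤ σ) (hX : 0 ≤ X) :
    0 ≤ (σ * X).trace.re := by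
  have hr : CFC.sqrt σ * CFC.sqrt σ = σ := CFC.sqrt_mul_sqrt_self σ
  have hconj : 0 ≤ CFC.sqrt σ * X * CFC.sqrt σ :=
    conjugate_nonneg_of_nonneg hX (CFC.sqrt_nonneg σ)
  rw [← hr, Matrix.mul_assoc, trace_mul_comm]
  exact (Complex.nonneg_iff.mp hconj.posSemidef.trace_nonneg).1

lemma re_trace_mul_le_re_trace_mul {σ X Y : Matrix n n ℂ} (hσ : 0 ≤ σ) (hXY : X ≤ Y) :
    (σ * X).trace.re ≤ (σ * Y).trace.re := by
  have := re_trace_mul_nonneg hσ (sub_nonneg.2 hXY)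
  rwa [Matrix.mul_sub, trace_sub, Complex.sub_re, sub_nonneg] at this

lemma re_trace_mul_sandwich_add_le {σ E S T : Matrix n n ℂ} (hσ : 0 ≤ σ)
    (hE : IsProjection E) (hS : S.IsHermitian) (hT : T.IsHermitian) :
    (σ * ((S + T) * E * (S + T))).trace.re ≤
      (√(σ * (T * T)).trace.re + √(σ * (S * E * S)).trace.re) ^ 2 := by
  let := σ.toMatrixSeminormedAddCommGroup hσ.posSemidef
  have norm_sq : ∀ X : Matrix n n ℂ, ‖X‖ ^ 2 = (σ * (Xᴴ * X)).trace.re := fun X => by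
    have h : (X * σ * Xᴴ).trace = (σ * (Xᴴ * X)).trace := by
      rw [trace_mul_comm, ← Matrix.mul_assoc, trace_mul_comm]
    rw [show ‖X‖ = √(X * σ * Xᴴ).trace.re from rfl, h,
      Real.sq_sqrt (re_trace_mul_nonneg hσ (posSemidef_conjTranspose_mul_self X).nonneg)]
  have sandwich : ∀ Y : Matrix n n ℂ, Y.IsHermitian → (E * Y)ᴴ * (E * Y) = Y * E * Y :=
    fun Y hY => by
      rw [conjTranspose_mul, hY.eq, hE.1.eq, Matrix.mul_assoc, ← Matrix.mul_assoc E E, hE.2,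
        Matrix.mul_assoc]
  have norm_proj_le : ‖E * T‖ ≤ ‖T‖ := by
    refine le_of_pow_le_pow_left₀ two_ne_zero (norm_nonneg _) ?_
    rw [norm_sq, norm_sq, conjTranspose_mul, hE.1.eq, Matrix.mul_assoc, ← Matrix.mul_assoc E, hE.2]
    refine re_trace_mul_le_re_trace_mul hσ ?_
    simpa [Matrix.mul_assoc, star_eq_conjTranspose] using
      star_left_conjugate_le_conjugate hE.isStarProjection.le_one T
  rw [show T * T = Tᴴ * T by rw [hT.eq], ← sandwich _ (hS.add hT), ← sandwich _ hS, ← norm_sq,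
    ← norm_sq, ← norm_sq, Real.sqrt_sq (norm_nonneg _), Real.sqrt_sq (norm_nonneg _)]
  gcongr
  calc ‖E * (S + T)‖ = ‖E * S + E * T‖ := by rw [Matrix.mul_add]
    _ ≤ ‖E * S‖ + ‖E * T‖ := norm_add_le _ _
    _ ≤ ‖T‖ + ‖E * S‖ := by linarith

open scoped Matrix.Norms.L2Operator in
lemma IsProjection.sub_psqrt_sub_mul_self_le {P Q : Matrix n n ℂ} (hP : IsProjection P)
    (hQ : Q.PosSemidef) (hQP : Loewner Q P) :
    (P - psqrt (P - Q)) * (P - psqrt (P - Q)) ≤ Q := by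
  rw [psqrt_eq_cfcSqrt hQP]
  exact hP.isStarProjection.sub_sqrt_sub_mul_self_le hQ.nonneg hQP

end Matrix

theorem measurement_success_bound_general {d t : ℕ} (w : Fin t → ℝ)
    (hw : ∀ ω, 0 ≤ w ω)
    (σ : Fin t → Matrix (Fin d) (Fin d) ℂ) (hσ : ∀ ω, IsDensity (σ ω))
    (Pi : Fin t → Matrix (Fin d) (Fin d) ℂ) (hPi : ∀ ω, IsProjection (Pi ω))
    (P Q : Matrix (Fin d) (Fin d) ℂ) (hP : IsProjection P) (hQ : Q.PosSemidef)
    (hQP : Loewner Q P)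
    (ε η : ℝ) (hη : 0 < η) (hηε : η < ε / 3)
    (h1 : ∑ ω, w ω *
        ((σ ω * (psqrt (P - Q) * Pi ω * psqrt (P - Q))).trace).re ≤ 1 - ε)
    (h2 : 1 - η < ∑ ω, w ω * ((σ ω * (P * Pi ω * P)).trace).re) :
    η ^ 2 ≤ ∑ ω, w ω * ((σ ω * Q).trace).re := by
  set S := psqrt (P - Q)
  set T := P - S
  have hσ₀ : ∀ ω, 0 ≤ σ ω := fun ω => (hσ ω).1.nonneg
  have hS : S.IsHermitian := (psqrt_eq_cfcSqrt hQP ▸ CFC.sqrt_nonneg (P - Q)).posSemidef.1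
  have hT : T.IsHermitian := hP.1.sub hS
  have hTT : ∀ ω, 0 ≤ (σ ω * (T * T)).trace.re := fun ω =>
    re_trace_mul_nonneg (hσ₀ ω) hT.isSelfAdjoint.mul_self_nonneg
  have hSPiS : ∀ ω, 0 ≤ (σ ω * (S * Pi ω * S)).trace.re := fun ω =>
    re_trace_mul_nonneg (hσ₀ ω) (hS.isSelfAdjoint.conjugate_nonneg (hPi ω).isStarProjection.nonneg)
  have hsuccess : ∀ ω, (σ ω * (P * Pi ω * P)).trace.re ≤
      (√(σ ω * (T * T)).trace.re + √(σ ω * (S * Pi ω * S)).trace.re) ^ 2 := fun ω => by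
    simpa only [T, add_sub_cancel] using re_trace_mul_sandwich_add_le (hσ₀ ω) (hPi ω) hS hT
  have hmean : 1 - η < (√(∑ ω, w ω * (σ ω * (T * T)).trace.re) +
      √(∑ ω, w ω * (σ ω * (S * Pi ω * S)).trace.re)) ^ 2 :=
    h2.trans_le (sum_mul_le_sq_sqrt_add_sqrt _ hw hTT hSPiS hsuccess)
  calc η ^ 2 ≤ ∑ ω, w ω * (σ ω * (T * T)).trace.re :=
        sq_le_of_one_sub_lt_sq_sqrt_add_sqrt
          (Finset.sum_nonneg fun ω _ => mul_nonneg (hw ω) (hTT ω))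
          (Finset.sum_nonneg fun ω _ => mul_nonneg (hw ω) (hSPiS ω)) h1 hη hηε hmean
    _ ≤ ∑ ω, w ω * (σ ω * Q).trace.re := Finset.sum_le_sum fun ω _ =>
        mul_le_mul_of_nonneg_left
          (re_trace_mul_le_re_trace_mul (hσ₀ ω) (hP.sub_psqrt_sub_mul_self_le hQ hQP)) (hw ω)

/-- The measurement-success estimate (Lemma 9 of the ergodic Feinstein argument). -/
theorem measurement_success_bound {d t : ℕ} (w : Fin t → ℝ)
    (hw : ∀ ω, 0 ≤ w ω) (hw1 : ∑ ω, w ω = 1)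
    (σ : Fin t → Matrix (Fin d) (Fin d) ℂ) (hσ : ∀ ω, IsDensity (σ ω))
    (Pi : Fin t → Matrix (Fin d) (Fin d) ℂ) (hPi : ∀ ω, IsProjection (Pi ω))
    (P Q : Matrix (Fin d) (Fin d) ℂ) (hP : IsProjection P) (hQ : Q.PosSemidef)
    (hQP : Loewner Q P) (hcomm : Q * P = P * Q)
    (ε η : ℝ) (hη : 0 < η) (hηε : η < ε / 3)
    (h1 : ∑ ω, w ω *
        ((σ ω * (psqrt (P - Q) * Pi ω * psqrt (P - Q))).trace).re ≤ 1 - ε)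
    (h2 : 1 - η < ∑ ω, w ω * ((σ ω * (P * Pi ω * P)).trace).re) :
    η ^ 2 ≤ ∑ ω, w ω * ((σ ω * Q).trace).re :=
  measurement_success_bound_general w hw σ hσ Pi hPi P Q hP hQ hQP ε η hη hηε h1 h2

end
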